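/- In the reduction from 2P2N-3SAT: given a satisfying truth assignment S of a 3-CNF formula Ψ with m variables (each occurring exactly twice positively and twice negatively) and d clauses, the constructed edge set M — containing e_{a_i b_i} if v_i is false, e_{a_i b̄_i} if v_i is true, and for each clause C_l one edge e_{c_l b_i} (resp. e_{c_l b̄_i}) for a chosen literal v_i (resp. ¬v_i) made true by S — is a 0-1 timed matching of size m + d in the constructed bounded-degree bipartite temporal graph. -/

import Mathlib

/-- Nodes of the temporal graph constructed from a 2P2N-3SAT instance with `m`
variables and `d` clauses: clause nodes `c_l`, variable nodes `a_i`, and literal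
nodes `lit i true = b_i`, `lit i false = b̄_i`. -/
inductive SatNode (m d : ℕ) : Type
  | clause : Fin d → SatNode m d
  | avar : Fin m → SatNode m d
  | lit : Fin m → Bool → SatNode m d
deriving DecidableEq

/-- Edges of the constructed temporal graph: variable edges `a_i – (b_i / b̄_i)`,
and clause edges `c_l – (b_i / b̄_i)`. -/
inductive SatEdge (m d : ℕ) : Type
  | var : Fin m → Bool → SatEdge m d
  | cl : Fin d → Fin m → Bool → SatEdge m d
deriving DecidableEq

/-- Endpoints of an edge. -/
def SatEdge.ends {m d : ℕ} : SatEdge m d → SatNode m d × SatNode m d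
  | .var i s => (.avar i, .lit i s)
  | .cl l i s => (.clause l, .lit i s)

/-- The set of timesteps at which an edge exists: variable edges exist on `[0, d)`,
the clause edge of clause `l` exists on `[l, l+1)`. -/
def SatEdge.tset {m d : ℕ} : SatEdge m d → Set ℕ
  | .var _ _ => Set.Ico 0 d
  | .cl l _ _ => Set.Ico (l : ℕ) ((l : ℕ) + 1)

/-- Two distinct edges overlap iff they share an endpoint and exist at a common time. -/
def SatEdge.Overlaps {m d : ℕ} (e f : SatEdge m d) : Prop :=
  e ≠ f ∧
    (e.ends.1 = f.ends.1 ∨ e.ends.1 = f.ends.2 ∨ e.ends.2 = f.ends.1 ∨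
      e.ends.2 = f.ends.2) ∧
    (e.tset ∩ f.tset).Nonempty

/-- The edge set of the temporal graph constructed from the formula `lit`
(clause `l` consists of the three literals `lit l 0, lit l 1, lit l 2`, a literal
being a pair (variable, polarity)): all variable edges, plus the clause edge
`c_l – (b_j / b̄_j)` exactly when the corresponding literal occurs in clause `l`. -/
def satEdgeSet (m d : ℕ) (lit : Fin d → Fin 3 → Fin m × Bool) : Set (SatEdge m d) :=
  {e | ∃ i s, e = SatEdge.var i s} ∪
    {e | ∃ l i s, e = SatEdge.cl l i s ∧ ∃ k, lit l k = (i, s)}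

/-- Reduction from 2P2N-3SAT, forward direction: a satisfying assignment `σ` of a
3-CNF formula with `m` variables (each occurring exactly twice positively and twice
negatively) and `d` clauses yields a 0-1 timed matching of size `m + d`, consisting of
the variable edge `a_i – b_i` if `σ i = false` (resp. `a_i – b̄_i` if `σ i = true`),
together with, for each clause `l`, the edge from `c_l` to the literal node of a chosen
literal of `C_l` made true by `σ`. -/
theorem stmt8 (m d : ℕ) (hd : 0 < d) (lit : Fin d → Fin 3 → Fin m × Bool)
    (h2p2n : ∀ v : Fin m, ∀ s : Bool,
      {p : Fin d × Fin 3 | lit p.1 p.2 = (v, s)}.ncard = 2)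
    (σ : Fin m → Bool)
    (choice : Fin d → Fin 3)
    (hsat : ∀ l : Fin d, σ (lit l (choice l)).1 = (lit l (choice l)).2) :
    let M : Set (SatEdge m d) :=
      {e | ∃ i : Fin m, e = SatEdge.var i (!(σ i))} ∪
        {e | ∃ l : Fin d, e = SatEdge.cl l (lit l (choice l)).1 (lit l (choice l)).2}
    M ⊆ satEdgeSet m d lit ∧
      (∀ e ∈ M, ∀ f ∈ M, ¬ SatEdge.Overlaps e f) ∧
      M.ncard = m + d := by
  intro M
  have hcl_mem : ∀ l : Fin d,
      SatEdge.cl l (lit l (choice l)).1 (lit l (choice l)).2 ∈ M := fun l =>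
    Or.inr ⟨l, rfl⟩
  refine ⟨?_, ?_, ?_⟩
  · rintro e (⟨i, rfl⟩ | ⟨l, rfl⟩)
    · exact Or.inl ⟨i, _, rfl⟩
    · exact Or.inr ⟨l, _, _, rfl, choice l, rfl⟩
  · rintro e he f hf ⟨hne, hend, hts⟩
    rcases he with ⟨i, rfl⟩ | ⟨l, rfl⟩ <;> rcases hf with ⟨j, rfl⟩ | ⟨l', rfl⟩
    · simp only [SatEdge.ends] at hend
      rcases hend with h | h | h | h <;> simp_all [SatNode.avar.injEq, SatNode.lit.injEq]
    · simp only [SatEdge.ends] at hend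
      have hs := hsat l'
      rcases hend with h | h | h | h
      · cases h
      · cases h
      · cases h
      rw [SatNode.lit.injEq] at h
      obtain ⟨rfl, h2⟩ := h
      rw [hs] at h2
      simp at h2
    · simp only [SatEdge.ends] at hend
      have hs := hsat l
      rcases hend with h | h | h | h
      · cases h
      · cases h
      · cases h
      rw [SatNode.lit.injEq] at h
      obtain ⟨rfl, h2⟩ := h
      rw [h2] at hs
      simp at hs
    · simp only [SatEdge.tset] at hts
      obtain ⟨t, ht1, ht2⟩ := hts
      simp only [Set.mem_Ico] at ht1 ht2
      have : (l : ℕ) = (l' : ℕ) := by omega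
      have : l = l' := Fin.ext this
      subst this
      exact hne rfl
  · have hM : M = Set.range (fun i : Fin m => SatEdge.var i (!(σ i))) ∪
        Set.range (fun l : Fin d =>
          SatEdge.cl l (lit l (choice l)).1 (lit l (choice l)).2) := by
      ext e
      simp only [M, Set.mem_union, Set.mem_setOf_eq, Set.mem_range, eq_comm]
    rw [hM]
    have h1 : (Set.range (fun i : Fin m => SatEdge.var (d := d) i (!(σ i)))).ncard = m := by
      rw [← Nat.card_coe_set_eq, Nat.card_range_of_injective
        (fun a b h => by injection h with h1 h2 : Function.Injective _)]
      simp
    have h2 : (Set.range (fun l : Fin d =>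
        SatEdge.cl (m := m) l (lit l (choice l)).1 (lit l (choice l)).2)).ncard = d := by
      rw [← Nat.card_coe_set_eq, Nat.card_range_of_injective
        (fun a b h => by injection h with h1 h2 h3 : Function.Injective _)]
      simp
    rw [Set.ncard_union_eq ?_ (Set.finite_range _) (Set.finite_range _), h1, h2]
    rw [Set.disjoint_left]
    rintro e ⟨i, rfl⟩ ⟨l, h⟩
    cases h
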